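/- arXiv:math/0411520 — 2 statements merged into one kernel-verified Lean document; each statement's English description precedes it below -/
import Mathlib

section
/- For an integer N ≥ 2 and positive integers k, j with k ≤ j, if d_{N,j} = c · d_{N,k} for some positive integer c, then the base-N^k expansion of c has all digits equal to 1, i.e., c = 1 + N^k + N^{2k} + ... + N^{lk} for some l ≥ 0, and consequently j = (l+1)k. -/
/-!
Multiplying by `N - 1` turns the hypothesis into `N ^ j - 1 = c * (N ^ k - 1)`. The gcd identity
for numbers `N ^ n - 1` then gives `k ∣ j`, say `j = k * m`, and `c` is the quotient
`(N ^ (k * m) - 1) / (N ^ k - 1) = 1 + N ^ k + ⋯ + N ^ ((m - 1) * k)`.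
-/

/-- Since `gcd (N ^ k - 1) (N ^ j - 1) = N ^ gcd k j - 1`, divisibility forces `gcd k j = k`. -/
theorem Nat.dvd_of_pow_sub_one_dvd_pow_sub_one {N k j : ℕ} (hN : 2 ≤ N)
    (h : N ^ k - 1 ∣ N ^ j - 1) : k ∣ j := by
  have hgcd : N ^ Nat.gcd k j - 1 = N ^ k - 1 := by
    rw [← Nat.pow_sub_one_gcd_pow_sub_one, Nat.gcd_eq_left h]
  have hpow : N ^ Nat.gcd k j = N ^ k := by
    have := Nat.one_le_pow (Nat.gcd k j) N (by omega)
    have := Nat.one_le_pow k N (by omega)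
    omega
  rw [← Nat.gcd_eq_left_iff_dvd, Nat.pow_right_injective hN hpow]

theorem stmt_2_general (N k j c : ℕ) (hN : 2 ≤ N) (hj : 0 < j)
    (h : (∑ i ∈ Finset.range j, N ^ i) = c * (∑ i ∈ Finset.range k, N ^ i)) :
    ∃ l : ℕ, c = ∑ i ∈ Finset.range (l + 1), (N ^ k) ^ i ∧ j = (l + 1) * k := by
  have hmul : N ^ j - 1 = c * (N ^ k - 1) := by
    rw [← geom_sum_mul_of_one_le (by omega : 1 ≤ N), ← geom_sum_mul_of_one_le (by omega : 1 ≤ N),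
      h, mul_assoc]
  obtain ⟨m, rfl⟩ := Nat.dvd_of_pow_sub_one_dvd_pow_sub_one hN (Dvd.intro_left c hmul.symm)
  obtain ⟨hk, hm⟩ := CanonicallyOrderedAdd.mul_pos.mp hj
  refine ⟨m - 1, ?_, by rw [Nat.sub_add_cancel hm, mul_comm]⟩
  have hNk : 0 < N ^ k - 1 := Nat.sub_pos_of_lt (Nat.one_lt_pow hk.ne' (by omega))
  rw [Nat.sub_add_cancel hm]
  apply Nat.eq_of_mul_eq_mul_right hNk
  rw [← hmul, geom_sum_mul_of_one_le (Nat.one_le_pow _ _ (by omega)), ← pow_mul]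

/-- If `d_{N,j} = c ⬝ d_{N,k}` with `c > 0`, `N ≥ 2`, `k ≤ j`, then the base-`N^k`
expansion of `c` has all digits `1`: `c = 1 + N^k + ⋯ + N^{lk}` for some `l ≥ 0`,
and consequently `j = (l+1)k`. -/
theorem stmt_2 (N k j c : ℕ) (hN : 2 ≤ N) (hk : 0 < k) (hj : 0 < j) (hkj : k ≤ j)
    (hc : 0 < c)
    (h : (∑ i ∈ Finset.range j, N ^ i) = c * (∑ i ∈ Finset.range k, N ^ i)) :
    ∃ l : ℕ, c = ∑ i ∈ Finset.range (l + 1), (N ^ k) ^ i ∧ j = (l + 1) * k :=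
  stmt_2_general N k j c hN hj h
end

section
/- If T = (T_1, ..., T_N) is a non-commutative weighted shift which is bounded below, meaning inf { λ_{i,w} : 1 ≤ i ≤ N, w ∈ F_N^+ } > 0, then each creation operator L_i lies in the C*-algebra generated by T_1, ..., T_N; specifically L_i = T_i (T_i* T_i)^{-1/2}. -/
noncomputable abbrev FockSpace (N : ℕ) := lp (fun _ : List (Fin N) => ℂ) 2

noncomputable def fockBasis {N : ℕ} (w : List (Fin N)) : FockSpace N :=
  lp.single 2 w (1 : ℂ)

/-!
Writing `T_i = L_i D_i` with `D_i = L_i* T_i`, so that `D_i ξ_w = λ_{i,w} ξ_w`, the isometry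
`L_i` drops out of `T_i* T_i = D_i²`. Since `λ_{i,w} ≥ ε > 0`, `D_i ≥ ε` is strictly positive,
so by uniqueness of positive square roots `D_i = (T_i* T_i)^{1/2}` and
`L_i = T_i (T_i* T_i)^{-1/2}`. The factor `(T_i* T_i)^{-1/2}` is a continuous function of
`T_i* T_i` in the continuous functional calculus, hence lies in the C*-algebra generated by `T_i`.
-/

lemma star_mul_self_eq_of_eq_mul {A : Type*} [Monoid A] [StarMul A] {t l d : A}
    (hl : star l * l = 1) (hd : IsSelfAdjoint d) (ht : t = l * d) :
    star t * t = d * d := by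
  rw [ht, star_mul, mul_assoc, ← mul_assoc (star l), hl, one_mul, hd.star_eq]

namespace CFC
variable {A : Type*} [CStarAlgebra A] [PartialOrder A] [StarOrderedRing A]

lemma rpow_mem {S : StarSubalgebra ℂ A} (hS : IsClosed (S : Set A)) {a : A} (ha : a ∈ S)
    (ha₀ : 0 ≤ a) (y : ℝ) : a ^ y ∈ S := by
  rw [rpow_eq_cfc_real ha₀]
  exact cfc_mem (hs := hS) _ ha

lemma mul_rpow_neg_half_mul_rpow_neg_half {a : A} (ha : IsStrictlyPositive a) :
    a * (a ^ (-(1 / 2) : ℝ) * a ^ (-(1 / 2) : ℝ)) = 1 := by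
  rw [← rpow_add ha.isUnit, ← rpow_mul_rpow_neg 1 ha, rpow_one a ha.nonneg]
  norm_num

variable {t l d : A}

lemma isStrictlyPositive_star_mul_self_of_eq_mul (hl : star l * l = 1)
    (hd : IsStrictlyPositive d) (ht : t = l * d) : IsStrictlyPositive (star t * t) := by
  rw [star_mul_self_eq_of_eq_mul hl hd.isSelfAdjoint ht]
  exact (hd.isUnit.mul hd.isUnit).isStrictlyPositive hd.isSelfAdjoint.mul_self_nonneg

lemma eq_mul_rpow_neg_half_of_eq_mul (hl : star l * l = 1) (hd : IsStrictlyPositive d)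
    (ht : t = l * d) : l = t * (star t * t) ^ (-(1 / 2) : ℝ) := by
  have hsqrt : (star t * t) ^ (1 / 2 : ℝ) = d := by
    rw [← sqrt_eq_rpow]
    exact sqrt_unique (star_mul_self_eq_of_eq_mul hl hd.isSelfAdjoint ht).symm hd.nonneg
  calc l = l * ((star t * t) ^ (1 / 2 : ℝ) * (star t * t) ^ (-(1 / 2) : ℝ)) := by
        rw [rpow_mul_rpow_neg _ (isStrictlyPositive_star_mul_self_of_eq_mul hl hd ht), mul_one]
    _ = t * (star t * t) ^ (-(1 / 2) : ℝ) := by rw [← mul_assoc, hsqrt, ← ht]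

theorem exists_nonneg_eq_mul_of_eq_mul (hl : star l * l = 1) (hd : IsStrictlyPositive d)
    (ht : t = l * d) :
    ∃ v : A, 0 ≤ v ∧ star t * t * (v * v) = 1 ∧ l = t * v ∧
      ∀ S : StarSubalgebra ℂ A, IsClosed (S : Set A) → t ∈ S → v ∈ S :=
  ⟨_, rpow_nonneg,
    mul_rpow_neg_half_mul_rpow_neg_half (isStrictlyPositive_star_mul_self_of_eq_mul hl hd ht),
    eq_mul_rpow_neg_half_of_eq_mul hl hd ht,
    fun _ hS htS => rpow_mem hS (mul_mem (star_mem htS) htS) (star_mul_self_nonneg t) _⟩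

end CFC

namespace HilbertBasis
open ContinuousLinearMap
variable {ι H : Type*} [NormedAddCommGroup H] [InnerProductSpace ℂ H] (b : HilbertBasis ι ℂ H)

lemma ext_continuousLinearMap {F : Type*} [AddCommGroup F] [Module ℂ F] [TopologicalSpace F]
    [T2Space F] {B₁ B₂ : H →L[ℂ] F} (h : ∀ i, B₁ (b i) = B₂ (b i)) : B₁ = B₂ := by
  ext x
  have hx := b.hasSum_repr x
  exact (hx.mapL B₁).unique (by simpa only [map_smul, h] using hx.mapL B₂)

lemma ext_inner {x y : H} (h : ∀ i, inner ℂ (b i) x = inner ℂ (b i) y) : x = y :=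
  b.repr.injective (lp.ext (funext fun i => by simp only [b.repr_apply_apply, h]))

lemma inner_apply_of_apply_eq_smul {B : H →L[ℂ] H} {μ : ι → ℂ}
    (hB : ∀ i, B (b i) = μ i • b i) (x : H) (v : ι) :
    inner ℂ (b v) (B x) = μ v * inner ℂ (b v) x := by
  classical
  have hsum := ((b.hasSum_repr x).mapL B).mapL (innerSL ℂ (b v))
  have hterm : ∀ i, innerSL ℂ (b v) (B (b.repr x i • b i)) =
      if i = v then μ v * inner ℂ (b v) x else 0 := by
    intro i
    rw [map_smul, hB, innerSL_apply_apply, inner_smul_right, inner_smul_right,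
      orthonormal_iff_ite.1 b.orthonormal, b.repr_apply_apply]
    by_cases h : i = v
    · subst h; simp [mul_comm]
    · simp [h, Ne.symm h]
  simp only [hterm] at hsum
  exact hsum.unique (hasSum_ite_eq v _)

lemma isPositive_of_apply_eq_smul {B : H →L[ℂ] H} {μ : ι → ℝ} (hμ : ∀ i, 0 ≤ μ i)
    (hB : ∀ i, B (b i) = (μ i : ℂ) • b i) : B.IsPositive := by
  have hinner : ∀ x, inner ℂ (B x) x = ((∑' i, μ i * ‖inner ℂ (b i) x‖ ^ 2 : ℝ) : ℂ) := by
    intro x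
    rw [← b.tsum_inner_mul_inner, Complex.ofReal_tsum]
    refine tsum_congr fun i => ?_
    rw [← inner_conj_symm (B x), b.inner_apply_of_apply_eq_smul hB, map_mul,
      Complex.conj_ofReal, mul_assoc, Complex.conj_mul']
    push_cast
    rfl
  rw [isPositive_iff_complex]
  intro x
  rw [hinner, RCLike.re_to_complex, Complex.ofReal_re]
  exact ⟨rfl, tsum_nonneg fun i => mul_nonneg (hμ i) (sq_nonneg _)⟩

variable [CompleteSpace H]

lemma adjoint_mul_self_eq_one {B : H →L[ℂ] H} (hB : Orthonormal ℂ fun i => B (b i)) :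
    adjoint B * B = 1 := by
  classical
  refine b.ext_continuousLinearMap fun w => b.ext_inner fun v => ?_
  rw [mul_apply_eq_comp, adjoint_inner_right, one_apply_eq_self, orthonormal_iff_ite.1 hB,
    orthonormal_iff_ite.1 b.orthonormal]

lemma isStrictlyPositive_of_apply_eq_smul {B : H →L[ℂ] H} {μ : ι → ℝ} {ε : ℝ} (hε : 0 < ε)
    (hμ : ∀ i, ε ≤ μ i) (hB : ∀ i, B (b i) = (μ i : ℂ) • b i) : IsStrictlyPositive B := by
  refine (isStrictlyPositive_algebraMap (A := H →L[ℂ] H) hε).of_le ?_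
  rw [ContinuousLinearMap.le_def]
  refine b.isPositive_of_apply_eq_smul (μ := fun i => μ i - ε) (fun i => sub_nonneg.2 (hμ i))
    fun i => ?_
  rw [sub_apply, hB]
  simp [sub_smul]

end HilbertBasis

noncomputable def fockHilbertBasis (N : ℕ) : HilbertBasis (List (Fin N)) ℂ (FockSpace N) :=
  HilbertBasis.ofRepr (LinearIsometryEquiv.refl ℂ _)

lemma fockHilbertBasis_apply {N : ℕ} (w : List (Fin N)) : fockHilbertBasis N w = fockBasis w :=
  ((fockHilbertBasis N).repr_symm_single w).symm

open ContinuousLinearMap in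
theorem stmt_10_general (N : ℕ)
    (T L : Fin N → FockSpace N →L[ℂ] FockSpace N) (lam : Fin N → List (Fin N) → ℝ)
    (hbelow : ∃ ε > (0 : ℝ), ∀ i w, ε ≤ lam i w)
    (hT : ∀ i w, T i (fockBasis w) = (lam i w : ℂ) • fockBasis (i :: w))
    (hL : ∀ i w, L i (fockBasis w) = fockBasis (i :: w)) :
    ∀ i, L i ∈ (StarAlgebra.adjoin ℂ (Set.range T)).topologicalClosure ∧
      ∃ V : FockSpace N →L[ℂ] FockSpace N, V.IsPositive ∧
        (adjoint (T i) * T i) * (V * V) = 1 ∧ L i = T i * V := by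
  obtain ⟨ε, hε, hεle⟩ := hbelow
  intro i
  set b := fockHilbertBasis N
  have hLL : star (L i) * L i = 1 := b.adjoint_mul_self_eq_one <| by
    have hLb : (fun w => L i (b w)) = b ∘ List.cons i :=
      funext fun w => by
        rw [Function.comp_apply, fockHilbertBasis_apply, hL, fockHilbertBasis_apply]
    rw [hLb]
    exact b.orthonormal.comp _ List.cons_injective
  set D := star (L i) * T i
  have hD : ∀ w, D (b w) = (lam i w : ℂ) • b w := fun w => by
    rw [fockHilbertBasis_apply, mul_apply_eq_comp, hT, map_smul, ← hL, ← mul_apply_eq_comp, hLL,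
      one_apply_eq_self]
  have hTLD : T i = L i * D := b.ext_continuousLinearMap fun w => by
    rw [mul_apply_eq_comp, hD, map_smul, fockHilbertBasis_apply, hL, hT]
  have hTmem : T i ∈ (StarAlgebra.adjoin ℂ (Set.range T)).topologicalClosure :=
    StarSubalgebra.le_topologicalClosure _ (StarAlgebra.subset_adjoin ℂ _ (Set.mem_range_self i))
  obtain ⟨V, hV, hVinv, hLV, hVmem⟩ := CFC.exists_nonneg_eq_mul_of_eq_mul hLL
    (b.isStrictlyPositive_of_apply_eq_smul hε (hεle i) hD) hTLD
  refine ⟨?_, V, (nonneg_iff_isPositive V).1 hV, hVinv, hLV⟩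
  rw [hLV]
  exact mul_mem hTmem (hVmem _ (StarSubalgebra.isClosed_topologicalClosure _) hTmem)

open ContinuousLinearMap in
/-- If a weighted shift `T = (T_1,…,T_N)` is bounded below, that is
`inf { λ_{i,w} } > 0`, then each creation operator `L_i` lies in the C*-algebra
generated by `T_1,…,T_N`; specifically `L_i = T_i (T_i* T_i)^{-1/2}`, i.e.
`L_i = T_i V` where `V` is the positive operator with `(T_i* T_i)(V V) = 1`. -/
theorem stmt_10 (N : ℕ) (hN : 2 ≤ N)
    (T L : Fin N → FockSpace N →L[ℂ] FockSpace N) (lam : Fin N → List (Fin N) → ℝ)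
    (hbdd : ∃ C, ∀ i w, lam i w ≤ C)
    (hbelow : ∃ ε > (0 : ℝ), ∀ i w, ε ≤ lam i w)
    (hT : ∀ i w, T i (fockBasis w) = (lam i w : ℂ) • fockBasis (i :: w))
    (hL : ∀ i w, L i (fockBasis w) = fockBasis (i :: w)) :
    ∀ i, L i ∈ (StarAlgebra.adjoin ℂ (Set.range T)).topologicalClosure ∧
      ∃ V : FockSpace N →L[ℂ] FockSpace N, V.IsPositive ∧
        (adjoint (T i) * T i) * (V * V) = 1 ∧ L i = T i * V :=
  stmt_10_general N T L lam hbelow hT hL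
end
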